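/- Let m_A : V → ℝ^(Fin a) be the linear marginal map with m_A(e(i,j,s)) = e i. If two pure states e(i,j,s) and e(i',j',s') of the bipartite BCT composite have the same marginal on the first system, then i = i', and there exist a permutation π of Fin b and σ : Fin b → G such that the local reversible transformation L_{π,σ} (the linear map with L_{π,σ}(e(x,y,t)) = e(x, π y, σ y · t)) maps e(i,j,s) to e(i',j',s'). Hence in BCT any two purifications of the same pure state are connected by a reversible transformation acting only on the purifying system: BCT satisfies essential uniqueness of purification (Property 7). -/
import Mathlib


/-- The sign group `{+1, -1}` under multiplication. -/
abbrev G : Type := ℤˣ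

/-- The marginal map `m_A : ℝ^(Fin a × Fin b × G) → ℝ^(Fin a)` discarding the
second system: the linear map with `m_A(e(i,j,s)) = e i`. -/
noncomputable def mA (a b : ℕ) : ((Fin a × Fin b × G) → ℝ) →ₗ[ℝ] (Fin a → ℝ) where
  toFun w := fun i => ∑ j : Fin b, ∑ s : G, w (i, j, s)
  map_add' := by
    intro x y
    funext i
    simp [Finset.sum_add_distrib]
  map_smul' := by
    intro r x
    funext i
    simp [Finset.mul_sum, mul_add]

/-- The reversible transformation acting locally on the second (purifying)
system: the linear map with `L_{π,σ}(e(x,y,t)) = e(x, π y, σ y · t)`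
(Postulate 3). -/
def Lmap (a b : ℕ) (π : Equiv.Perm (Fin b)) (σ : Fin b → G) :
    ((Fin a × Fin b × G) → ℝ) →ₗ[ℝ] ((Fin a × Fin b × G) → ℝ) where
  toFun w := fun p => w (p.1, π.symm p.2.1, σ (π.symm p.2.1) * p.2.2)
  map_add' := fun _ _ => rfl
  map_smul' := fun _ _ => rfl

/-- Essential uniqueness of purification in BCT (Property 7): if two pure states
`e(i,j,s)` and `e(i',j',s')` of the bipartite composite have the same marginal on
the first system, then `i = i'` and some local reversible transformation of the
purifying system maps one to the other. -/
theorem bct_essential_uniqueness_of_purification (a b : ℕ)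
    (ha : 0 < a) (hb : 0 < b)
    (i i' : Fin a) (j j' : Fin b) (s s' : G)
    (hmarg : mA a b (Pi.single (i, j, s) 1) = mA a b (Pi.single (i', j', s') 1)) :
    i = i' ∧
    ∃ (π : Equiv.Perm (Fin b)) (σ : Fin b → G),
      Lmap a b π σ (Pi.single (i, j, s) 1) =
        (Pi.single (i', j', s') 1 : (Fin a × Fin b × G) → ℝ) := by
  have key : ∀ (i : Fin a) (j : Fin b) (s : G),
      mA a b (Pi.single (i, j, s) 1) = Pi.single i 1 := by
    intro i j s
    funext x
    rcases Int.units_eq_one_or s with rfl | rfl <;>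
      simp [mA, Pi.single_apply, Prod.ext_iff, ite_and, Finset.sum_ite_eq']
  rw [key, key] at hmarg
  have hii : i = i' := by
    by_contra hne
    have h := congrFun hmarg i
    simp [Pi.single_apply, hne, Ne.symm hne] at h
  subst hii
  refine ⟨rfl, Equiv.swap j j', fun y => if y = j then s * s'⁻¹ else 1, ?_⟩
  funext p
  obtain ⟨x, y, t⟩ := p
  simp only [Lmap, LinearMap.coe_mk, AddHom.coe_mk, Pi.single_apply,
    Prod.mk.injEq, Equiv.symm_swap]
  by_cases hy : y = j'
  · subst hy
    have hiff : (s * s'⁻¹) * t = s ↔ t = s' := by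
      constructor
      · intro h
        have h2 : (s * s'⁻¹) * t = (s * s'⁻¹) * s' := by rw [h]; group
        exact mul_left_cancel h2
      · rintro rfl; group
    simp only [Equiv.swap_apply_right, eq_self_iff_true, if_true, true_and, hiff]
  · have hsy : Equiv.swap j j' y ≠ j := by
      intro h
      exact hy ((Equiv.swap j j').injective (by rw [h, Equiv.swap_apply_right]))
    simp [hy, hsy]
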